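/- arXiv:2103.00834 — 4 statements merged into one kernel-verified Lean document; each statement's English description precedes it below -/
import Mathlib

section
/- Let 0 < α < 1 and let x, y ∈ [1/2, 1]. Define β = (1-α)(1-x) + α·y and h(x,y,α) = (1-x)·y/β + x·(1-y)/(1-β). Then h(x,y,α) ≤ 1, with equality when x = y = 1/2. -/
/-- h(x,y,α) = (1-x)y/β + x(1-y)/(1-β) ≤ 1, with equality when x = y = 1/2. -/
theorem stmt3 (α x y : ℝ) (hα0 : 0 < α) (hα1 : α < 1)
    (hx : 1/2 ≤ x) (hx1 : x ≤ 1) (hy : 1/2 ≤ y) (hy1 : y ≤ 1)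
    (β : ℝ) (hβ : β = (1 - α) * (1 - x) + α * y) :
    (1 - x) * y / β + x * (1 - y) / (1 - β) ≤ 1
    ∧ (x = 1/2 → y = 1/2 → (1 - x) * y / β + x * (1 - y) / (1 - β) = 1) := by
  have hb0 : 0 < β := by nlinarith
  have hb1 : β < 1 := by nlinarith
  have h1b : (0:ℝ) < 1 - β := by linarith
  have key : (1 - x) * y * (1 - β) + x * (1 - y) * β ≤ β * (1 - β) := by
    nlinarith [mul_nonneg (mul_nonneg hα0.le (by linarith : (0:ℝ) ≤ 1 - α))
      (sq_nonneg (x + y - 1))]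
  constructor
  · rw [div_add_div _ _ hb0.ne' h1b.ne', div_le_one (by positivity)]
    nlinarith [key]
  · intro hx2 hy2
    subst hx2 hy2
    have : β = 1/2 := by rw [hβ]; ring
    rw [this]; norm_num
end

section
/- Let 0 < α < 1 and x, y ∈ [1/2, 1]. Define β = (1-α)(1-x) + α·y and h(x,y) = (1-x)y/β + x(1-y)/(1-β). Then the partial derivative of h with respect to x equals α·(((1-y)β)² - (y(1-β))²)/(β²(1-β)²), and this is ≤ 0, i.e., h is nonincreasing in x on [1/2, 1]. -/
/-!
Write `β t = (1 - α)(1 - t) + α y`, so `β' = -(1 - α)`. In the quotient rule the two numerators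
collapse to `-α y²` and `α (1 - y)²`, hence `∂ₓh = α ((1 - y)² / (1 - β)² - y² / β²)`.
Since `y (1 - β) - (1 - y) β = y - β ≥ 0` (because `1 - x ≤ 1/2 ≤ y`), the second square dominates.
-/

namespace MixtureRatio

noncomputable section

def beta (α y t : ℝ) : ℝ := (1 - α) * (1 - t) + α * y

def h (α y t : ℝ) : ℝ := (1 - t) * y / beta α y t + t * (1 - y) / (1 - beta α y t)

variable {α y x : ℝ}

theorem hasDerivAt_beta : HasDerivAt (beta α y) (-(1 - α)) x :=
  ((((hasDerivAt_id x).const_sub 1).const_mul (1 - α)).add_const (α * y)).congr_deriv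
    (by ring)

theorem hasDerivAt_h (hβ : beta α y x ≠ 0) (hβ' : 1 - beta α y x ≠ 0) :
    HasDerivAt (h α y)
      (α * (((1 - y) * beta α y x) ^ 2 - (y * (1 - beta α y x)) ^ 2)
        / (beta α y x ^ 2 * (1 - beta α y x) ^ 2)) x := by
  have hfst : HasDerivAt (fun t => (1 - t) * y) (-y) x := by
    simpa using ((hasDerivAt_id x).const_sub 1).mul_const y
  have hsnd : HasDerivAt (fun t => t * (1 - y)) (1 - y) x := by
    simpa using (hasDerivAt_id x).mul_const (1 - y)
  have hβ'deriv : HasDerivAt (fun t => 1 - beta α y t) (1 - α) x := by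
    simpa using hasDerivAt_beta.const_sub 1
  have hnum₁ : -y * beta α y x - (1 - x) * y * -(1 - α) = -(α * y ^ 2) := by
    unfold beta; ring
  have hnum₂ : (1 - y) * (1 - beta α y x) - x * (1 - y) * (1 - α) = α * (1 - y) ^ 2 := by
    unfold beta; ring
  refine ((hfst.div hasDerivAt_beta hβ).add (hsnd.div hβ'deriv hβ')).congr_deriv ?_
  rw [hnum₁, hnum₂]
  field_simp
  ring

theorem beta_pos (hα : 0 < α) (hα1 : α ≤ 1) (hy : 0 < y) (hx1 : x ≤ 1) : 0 < beta α y x := by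
  unfold beta; nlinarith

theorem beta_lt_one (hα : 0 ≤ α) (hα1 : α < 1) (hy1 : y ≤ 1) (hx : 0 < x) : beta α y x < 1 := by
  unfold beta; nlinarith

theorem beta_le (hα1 : α ≤ 1) (hxy : 1 - x ≤ y) : beta α y x ≤ y := by
  unfold beta; nlinarith

theorem sq_sub_sq_nonpos_of_le {b : ℝ} (hb : 0 ≤ b) (hby : b ≤ y) (hy1 : y ≤ 1) :
    ((1 - y) * b) ^ 2 - (y * (1 - b)) ^ 2 ≤ 0 := by
  have hlo : 0 ≤ (1 - y) * b := mul_nonneg (by linarith) hb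
  have hle : (1 - y) * b ≤ y * (1 - b) := by linarith
  exact sub_nonpos.mpr (pow_le_pow_left₀ hlo hle 2)

end

end MixtureRatio

open MixtureRatio in
/-- The partial derivative of h with respect to x equals
α(((1-y)β)² - (y(1-β))²)/(β²(1-β)²), and it is ≤ 0 on [1/2,1]. -/
theorem stmt4 (α y : ℝ) (hα0 : 0 < α) (hα1 : α < 1)
    (hy : 1/2 ≤ y) (hy1 : y ≤ 1)
    (x : ℝ) (hx : 1/2 ≤ x) (hx1 : x ≤ 1) :
    HasDerivAt (fun t : ℝ =>
        (1 - t) * y / ((1 - α) * (1 - t) + α * y)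
          + t * (1 - y) / (1 - ((1 - α) * (1 - t) + α * y)))
      (α * (((1 - y) * ((1 - α) * (1 - x) + α * y)) ^ 2
            - (y * (1 - ((1 - α) * (1 - x) + α * y))) ^ 2)
        / (((1 - α) * (1 - x) + α * y) ^ 2
            * (1 - ((1 - α) * (1 - x) + α * y)) ^ 2)) x
    ∧ α * (((1 - y) * ((1 - α) * (1 - x) + α * y)) ^ 2
            - (y * (1 - ((1 - α) * (1 - x) + α * y))) ^ 2)
        / (((1 - α) * (1 - x) + α * y) ^ 2
            * (1 - ((1 - α) * (1 - x) + α * y)) ^ 2) ≤ 0 := by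
  have hβ : 0 < beta α y x := beta_pos hα0 hα1.le (by linarith) hx1
  have hβ1 : beta α y x < 1 := beta_lt_one hα0.le hα1 hy1 (by linarith)
  refine ⟨hasDerivAt_h hβ.ne' (sub_ne_zero.mpr hβ1.ne'), ?_⟩
  have hβy : beta α y x ≤ y := beta_le hα1.le (by linarith)
  exact div_nonpos_of_nonpos_of_nonneg
    (mul_nonpos_of_nonneg_of_nonpos hα0.le (sq_sub_sq_nonpos_of_le hβ.le hβy hy1)) (by positivity)
end

section
/- Let 0 < α < 1, let 1/2 ≤ p00, p11 ≤ p ≤ 1, and let δ be a real number. Then the first-order bias of the calibration estimator, B = δ·T/(β(1-β)) with β = (1-α)(1-p00) + α·p11 and T = (1-α)p00(1-p00) + α·p11(1-p11), satisfies 4p(1-p)·|δ| ≤ |B| ≤ |δ|. -/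
/-- Bounds on the first-order bias of the calibration estimator:
4p(1-p)|δ| ≤ |B| ≤ |δ|, where B = δ·T/(β(1-β)). -/
theorem stmt6 (α p00 p11 p δ : ℝ) (hα0 : 0 < α) (hα1 : α < 1)
    (h00 : 1/2 ≤ p00) (h11 : 1/2 ≤ p11)
    (h00p : p00 ≤ p) (h11p : p11 ≤ p) (hp1 : p ≤ 1)
    (β T B : ℝ)
    (hβ : β = (1 - α) * (1 - p00) + α * p11)
    (hT : T = (1 - α) * p00 * (1 - p00) + α * p11 * (1 - p11))
    (hB : B = δ * T / (β * (1 - β))) :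
    4 * p * (1 - p) * |δ| ≤ |B| ∧ |B| ≤ |δ| := by
  have hp00le1 : p00 ≤ 1 := h00p.trans hp1
  have hp11le1 : p11 ≤ 1 := h11p.trans hp1
  have hβpos : 0 < β := by nlinarith
  have h1βpos : 0 < 1 - β := by nlinarith
  have hDpos : 0 < β * (1 - β) := mul_pos hβpos h1βpos
  have hTnn : 0 ≤ T := by
    rw [hT]
    have := mul_nonneg (mul_nonneg (by linarith : (0:ℝ) ≤ 1 - α) (by linarith : (0:ℝ) ≤ p00)) (by linarith : (0:ℝ) ≤ 1 - p00)
    have := mul_nonneg (mul_nonneg hα0.le (by linarith : (0:ℝ) ≤ p11)) (by linarith : (0:ℝ) ≤ 1 - p11)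
    linarith
  have hTD : T ≤ β * (1 - β) := by
    nlinarith [mul_nonneg (mul_nonneg hα0.le (by linarith : (0:ℝ) ≤ 1 - α))
      (sq_nonneg (p00 + p11 - 1))]
  have hlow : 4 * p * (1 - p) * (β * (1 - β)) ≤ T := by
    have hpT : p * (1 - p) ≤ T := by
      nlinarith [mul_nonneg (mul_nonneg hα0.le (by linarith : (0:ℝ) ≤ p - p11))
          (by linarith : (0:ℝ) ≤ p11 + p - 1),
        mul_nonneg (mul_nonneg (by linarith : (0:ℝ) ≤ 1 - α)
          (by linarith : (0:ℝ) ≤ p - p00)) (by linarith : (0:ℝ) ≤ p00 + p - 1)]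
    have hD4 : β * (1 - β) ≤ 1/4 := by nlinarith [sq_nonneg (2*β - 1)]
    nlinarith [mul_nonneg (by linarith : (0:ℝ) ≤ p) (by linarith : (0:ℝ) ≤ 1 - p)]
  have habsB : |B| = |δ| * T / (β * (1 - β)) := by
    rw [hB, abs_div, abs_mul, abs_of_nonneg hTnn, abs_of_pos hDpos]
  constructor
  · rw [habsB, le_div_iff₀ hDpos]
    have : 4 * p * (1 - p) * (β * (1 - β)) * |δ| ≤ T * |δ| :=
      mul_le_mul_of_nonneg_right hlow (abs_nonneg δ)
    nlinarith
  · rw [habsB, div_le_iff₀ hDpos]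
    have := mul_le_mul_of_nonneg_left hTD (abs_nonneg δ)
    nlinarith
end

section
/- Let 0 < α < 1, 0 ≤ p00, p11 ≤ 1 with p00 + p11 ≠ 1, and let α' = α + δ with 0 ≤ α' ≤ 1. Define β' = (1-α')(1-p00) + α'·p11, c11 = α·p11/β and c10 = α·(1-p11)/(1-β) where β = (1-α)(1-p00) + α·p11 ∈ (0,1). Then β'·c11 + (1-β')·c10 = α' - δ·T/(β(1-β)), where T = (1-α)p00(1-p00) + α·p11(1-p11). -/
/-!
Write `κ = p00 + p11 - 1` and `β(a) = (1 - a)(1 - p00) + a p11`, so that `β' = β + δ κ`.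
Since `β c11 + (1 - β) c10 = α` (total probability) and `c11 - c10 = α (1 - α) κ / (β (1 - β))`,
the left-hand side equals `α + δ α (1 - α) κ² / (β (1 - β))`. The law of total variance for the
predicted label, `β (1 - β) = T + α (1 - α) κ²`, turns this into the right-hand side.
-/

def posRate (α p00 p11 : ℝ) : ℝ := (1 - α) * (1 - p00) + α * p11

section

variable (α p00 p11 : ℝ)

lemma posRate_add (δ : ℝ) :
    posRate (α + δ) p00 p11 = posRate α p00 p11 + δ * (p00 + p11 - 1) := by
  unfold posRate; ring

lemma posRate_mul_one_sub_posRate :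
    posRate α p00 p11 * (1 - posRate α p00 p11) =
      ((1 - α) * p00 * (1 - p00) + α * p11 * (1 - p11)) + α * (1 - α) * (p00 + p11 - 1) ^ 2 := by
  unfold posRate; ring

lemma div_posRate_sub_div_one_sub_posRate (h0 : posRate α p00 p11 ≠ 0)
    (h1 : 1 - posRate α p00 p11 ≠ 0) :
    α * p11 / posRate α p00 p11 - α * (1 - p11) / (1 - posRate α p00 p11) =
      α * (1 - α) * (p00 + p11 - 1) / (posRate α p00 p11 * (1 - posRate α p00 p11)) := by
  rw [div_sub_div _ _ h0 h1]
  congr 1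
  unfold posRate; ring

end

lemma mul_div_add_one_sub_mul_div {b x y : ℝ} (hb : b ≠ 0) (hb1 : 1 - b ≠ 0) (b' : ℝ) :
    b' * (x / b) + (1 - b') * (y / (1 - b)) = x + y + (b' - b) * (x / b - y / (1 - b)) := by
  field_simp
  ring

theorem stmt10_general (α δ p00 p11 : ℝ)
    (α' : ℝ) (hα' : α' = α + δ)
    (β β' c11 c10 T : ℝ)
    (hβ : β = (1 - α) * (1 - p00) + α * p11) (hβ0 : 0 < β) (hβ1 : β < 1)
    (hβ' : β' = (1 - α') * (1 - p00) + α' * p11)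
    (hc11 : c11 = α * p11 / β) (hc10 : c10 = α * (1 - p11) / (1 - β))
    (hT : T = (1 - α) * p00 * (1 - p00) + α * p11 * (1 - p11)) :
    β' * c11 + (1 - β') * c10 = α' - δ * T / (β * (1 - β)) := by
  replace hβ : β = posRate α p00 p11 := hβ
  replace hβ' : β' = β + δ * (p00 + p11 - 1) := by rw [hβ', hα', hβ]; exact posRate_add ..
  have h0 : β ≠ 0 := hβ0.ne'
  have h1 : 1 - β ≠ 0 := (sub_pos.mpr hβ1).ne'
  have hvar : β * (1 - β) = T + α * (1 - α) * (p00 + p11 - 1) ^ 2 := by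
    rw [hT, hβ]; exact posRate_mul_one_sub_posRate ..
  have hdiff : c11 - c10 = α * (1 - α) * (p00 + p11 - 1) / (β * (1 - β)) := by
    subst hc11 hc10 hβ; exact div_posRate_sub_div_one_sub_posRate _ _ _ h0 h1
  calc β' * c11 + (1 - β') * c10
      = α * p11 + α * (1 - p11) + (β' - β) * (c11 - c10) := by
        rw [hc11, hc10]; exact mul_div_add_one_sub_mul_div h0 h1 β'
    _ = α + δ * (β * (1 - β) - T) / (β * (1 - β)) := by
        rw [hβ', hdiff, hvar]; ring
    _ = α' - δ * T / (β * (1 - β)) := by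
        rw [hα']; field_simp; ring

/-- Algebraic core of the bias of the calibration estimator under drift:
β'·c11 + (1-β')·c10 = α' - δ·T/(β(1-β)). -/
theorem stmt10 (α δ p00 p11 : ℝ) (hα0 : 0 < α) (hα1 : α < 1)
    (h00 : 0 ≤ p00) (h00' : p00 ≤ 1) (h11 : 0 ≤ p11) (h11' : p11 ≤ 1)
    (hsum : p00 + p11 ≠ 1)
    (α' : ℝ) (hα' : α' = α + δ) (hα'0 : 0 ≤ α') (hα'1 : α' ≤ 1)
    (β β' c11 c10 T : ℝ)
    (hβ : β = (1 - α) * (1 - p00) + α * p11) (hβ0 : 0 < β) (hβ1 : β < 1)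
    (hβ' : β' = (1 - α') * (1 - p00) + α' * p11)
    (hc11 : c11 = α * p11 / β) (hc10 : c10 = α * (1 - p11) / (1 - β))
    (hT : T = (1 - α) * p00 * (1 - p00) + α * p11 * (1 - p11)) :
    β' * c11 + (1 - β') * c10 = α' - δ * T / (β * (1 - β)) :=
  stmt10_general α δ p00 p11 α' hα' β β' c11 c10 T hβ hβ0 hβ1 hβ' hc11 hc10 hT
end
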